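/- arXiv:q-alg/9508012 — 3 statements merged into one kernel-verified Lean document; each statement's English description precedes it below -/
import Mathlib

section
/- Let n = 2l+1 be odd and let 1 ≤ k ≤ r ≤ l. For each pair (a, c) with 0 ≤ a ≤ k and 0 ≤ c ≤ a, define d(a,c) = min(k+r-2a+c, n-(k+r-2a+c)). Then the map (a,c) ↦ (c, d(a,c)) is injective on the set {(a,c) : 0 ≤ c ≤ a ≤ k}. -/
/-- Multiplicity-freeness for `A_{2l}^{(2)}`: with `n = 2l+1` odd, `1 ≤ k ≤ r ≤ l`,
and `d(a,c) = min(k+r-2a+c, n-(k+r-2a+c))`, the map `(a,c) ↦ (c, d(a,c))` is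
injective on `{(a,c) : 0 ≤ c ≤ a ≤ k}`. -/
theorem stmt_3 (l k r n : ℤ) (hl : 1 ≤ l) (hk : 1 ≤ k) (hkr : k ≤ r) (hr : r ≤ l)
    (hn : n = 2 * l + 1)
    (d : ℤ → ℤ → ℤ)
    (hd : ∀ a c : ℤ, d a c = min (k + r - 2 * a + c) (n - (k + r - 2 * a + c))) :
    ∀ a c a' c' : ℤ, 0 ≤ c → c ≤ a → a ≤ k → 0 ≤ c' → c' ≤ a' → a' ≤ k →
      (c, d a c) = (c', d a' c') → (a, c) = (a', c') := by
  intro a c a' c' h1 h2 h3 h4 h5 h6 heq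
  rw [Prod.mk.injEq] at heq ⊢
  obtain ⟨hc, hdeq⟩ := heq
  rw [hd, hd] at hdeq
  omega
end

section
/- For integers n ≥ 3 and a, b ≥ 0, one has dim(b,a) = Σ_{c=0}^{a} dim₀(b,c), where dim(b,a) = ((b+1)/(n-1))·binom(a+b+n-1, n-2)·binom(a+n-2, n-2) and dim₀(d,c) = ((1+d)(2c+d+n-1)/((n-1)(n-2)))·binom(c+d+n-2, n-3)·binom(c+n-3, n-3). -/
/-!
Both sides grow by the same amount when `a` increases by one: writing every binomial coefficient
of `dim(b, a+1)` and `dim(b, a)` as a rational multiple of `C(a+b+n-1, n-3)·C(a+n-2, n-3)`, the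
difference `dim(b, a+1) - dim(b, a)` becomes `dim₀(b, a+1)`, because
`(u+n-2)(v+n-2) - uv = (n-2)(u+v+n-2)` for `u = a+b+2`, `v = a+1`.
The identity then follows by induction on `a`, the base case `dim(b, 0) = dim₀(b, 0)` being a
single application of the absorption identity.
-/

open Finset

namespace BranchingDim

lemma cast_choose_succ_succ (N k : ℕ) :
    ((N + 1).choose (k + 1) : ℚ) = (N + 1) / (k + 1) * N.choose k := by
  rw [div_mul_eq_mul_div, eq_div_iff (by positivity)]
  exact_mod_cast (Nat.add_one_mul_choose_eq N k).symm

lemma cast_choose_add_succ (k t : ℕ) :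
    ((k + t).choose (k + 1) : ℚ) = t / (k + 1) * (k + t).choose k := by
  rw [div_mul_eq_mul_div, eq_div_iff (by positivity)]
  have h := Nat.choose_succ_right_eq (k + t) k
  rw [Nat.add_sub_cancel_left, mul_comm _ t] at h
  exact_mod_cast h

/- `slDim m a b = dim(b, a)` and `spDim m b c = dim₀(b, c)` for `n = m + 3`; the shift removes
every truncated subtraction. -/

def slDim (m a b : ℕ) : ℚ :=
  (b + 1) / (m + 2) * (a + b + m + 2).choose (m + 1) * (a + m + 1).choose (m + 1)

def spDim (m b c : ℕ) : ℚ :=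
  (b + 1) * (2 * c + b + m + 2) / ((m + 2) * (m + 1)) * (c + b + m + 1).choose m * (c + m).choose m

lemma slDim_zero (m b : ℕ) : slDim m 0 b = spDim m b 0 := by
  have hX := cast_choose_succ_succ (b + m + 1) m
  push_cast at hX
  simp only [slDim, spDim, zero_add, Nat.choose_self, Nat.cast_zero, mul_zero]
  rw [show b + m + 2 = b + m + 1 + 1 by ring, hX]
  field_simp
  ring

lemma slDim_succ (m a b : ℕ) : slDim m (a + 1) b = slDim m a b + spDim m b (a + 1) := by
  have h₁ := cast_choose_succ_succ (a + b + m + 2) m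
  have h₂ := cast_choose_add_succ m (a + b + 2)
  have h₃ := cast_choose_succ_succ (a + m + 1) m
  have h₄ := cast_choose_add_succ m (a + 1)
  simp only [slDim, spDim]
  rw [show a + 1 + b + m + 2 = a + b + m + 2 + 1 by ring, show a + 1 + m + 1 = a + m + 1 + 1 by ring,
    h₁, h₃, show a + b + m + 2 = m + (a + b + 2) by ring, show a + m + 1 = m + (a + 1) by ring,
    h₂, h₄, show a + 1 + b + m + 1 = m + (a + b + 2) by ring, show a + 1 + m = m + (a + 1) by ring]
  push_cast
  field_simp
  ring

lemma slDim_eq_sum_spDim (m a b : ℕ) : slDim m a b = ∑ c ∈ range (a + 1), spDim m b c := by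
  induction a with
  | zero => simp [slDim_zero]
  | succ a ih => rw [slDim_succ, ih, sum_range_succ _ (a + 1)]

end BranchingDim

open BranchingDim in
/-- Dimension consistency of the branching rule
`V(bλ_1 + aλ_2) = ⊕_{c=0}^{a} V_0(bλ_1 + cλ_2)` for `A_{n-1} ↓ C_l` (`n = 2l`):
`dim(b,a) = Σ_{c=0}^{a} dim₀(b,c)` where
`dim(b,a) = ((b+1)/(n-1))·C(a+b+n-1, n-2)·C(a+n-2, n-2)` and
`dim₀(d,c) = ((1+d)(2c+d+n-1)/((n-1)(n-2)))·C(c+d+n-2, n-3)·C(c+n-3, n-3)`. -/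
theorem stmt_5 (n a b : ℕ) (hn : 3 ≤ n) :
    (((b : ℚ) + 1) / ((n : ℚ) - 1))
        * ((a + b + n - 1).choose (n - 2) : ℚ) * ((a + n - 2).choose (n - 2) : ℚ)
      = ∑ c ∈ Finset.range (a + 1),
        ((1 + (b : ℚ)) * (2 * (c : ℚ) + b + (n : ℚ) - 1) / (((n : ℚ) - 1) * ((n : ℚ) - 2)))
          * ((c + b + n - 2).choose (n - 3) : ℚ) * ((c + n - 3).choose (n - 3) : ℚ) := by
  obtain ⟨m, rfl⟩ : ∃ m, n = m + 3 := ⟨n - 3, by omega⟩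
  convert slDim_eq_sum_spDim m a b using 1
  · simp only [slDim, show a + b + (m + 3) - 1 = a + b + m + 2 by omega,
      show a + (m + 3) - 2 = a + m + 1 by omega, show m + 3 - 2 = m + 1 by omega]
    push_cast
    ring
  · refine sum_congr rfl fun c _ => ?_
    simp only [spDim, show c + b + (m + 3) - 2 = c + b + m + 1 by omega,
      show c + (m + 3) - 3 = c + m by omega, show m + 3 - 3 = m by omega]
    push_cast
    ring
end

section
/- For integers l ≥ 1, a ≥ 1, n = 2l+1, the eigenvalue C_k = k(n+a-k-1) + (1/4)l(a-1)(n+a-2) for 1 ≤ k ≤ l-1, extended by C_{top} = l(n+a-l-1) + (1/4)l(a-1)(n+a-2), satisfies: for consecutive k, C_{k+1} - C_k = n + a - 2k - 2, and the resulting recursion ρ_k(u) = Π_{i=1}^{l-k} ⟨(a-1)/2 + i⟩_{(-1)^i} is the unique solution of ρ_k = ⟨(C_{k+1} - C_k)/2⟩_{ε} · ρ_{k+1} with ρ_l = 1 and sign pattern ε = (-1)^{l-k}, where ⟨s⟩_± = (1 ± u q^s)/(u ± q^s). -/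
lemma icc_insert_top (m : ℤ) (hm : 1 ≤ m) :
    Finset.Icc (1 : ℤ) m = insert m (Finset.Icc 1 (m - 1)) := by
  ext x; simp only [Finset.mem_insert, Finset.mem_Icc]; omega

/-- R-matrix eigenvalues for `U_q(D_{l+1}^{(2)})` on `V_0(λ_l) ⊗ V_0(aλ_l)`, `n = 2l+1`:
the Casimir eigenvalues `C_k = k(n+a-k-1) + (1/4)l(a-1)(n+a-2)` (with
`C_l = l(n+a-l-1) + (1/4)l(a-1)(n+a-2)`) satisfy `C_{k+1} - C_k = n+a-2k-2`, and
`ρ_k = Π_{i=1}^{l-k} ⟨(a-1)/2 + i⟩_{(-1)^i}` is the unique solution of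
`ρ_k = ⟨(C_{k+1}-C_k)/2⟩_{(-1)^{l-k}} ρ_{k+1}` with `ρ_l = 1`.  Here
`⟨s⟩_ε = (1 + ε u q^s)/(u + ε q^s)`; exponents are doubled (`bracket s2 ε = ⟨s2/2⟩_ε`)
and `v = q^{1/2}`. -/
theorem stmt_11 (l a n : ℤ) (hl : 1 ≤ l) (ha : 1 ≤ a) (hn : n = 2 * l + 1)
    (C : ℤ → ℚ)
    (hC : ∀ k : ℤ, 1 ≤ k → k ≤ l - 1 →
      C k = (k : ℚ) * ((n : ℚ) + a - k - 1) + (1 / 4) * l * ((a : ℚ) - 1) * ((n : ℚ) + a - 2))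
    (hCl : C l = (l : ℚ) * ((n : ℚ) + a - l - 1) + (1 / 4) * l * ((a : ℚ) - 1) * ((n : ℚ) + a - 2))
    (F : Type*) [Field F] (u q v : F) (hq : q = v * v)
    (bracket : ℤ → F → F)
    (hbracket : ∀ (s : ℤ) (ε : F), bracket s ε = (1 + ε * u * v ^ s) / (u + ε * v ^ s))
    (ρ : ℤ → F)
    (hρ : ∀ k : ℤ, ρ k = ∏ i ∈ Finset.Icc (1 : ℤ) (l - k),
      bracket ((a - 1) + 2 * i) ((-1 : F) ^ i.toNat)) :
    (∀ k : ℤ, 1 ≤ k → k ≤ l - 1 → C (k + 1) - C k = ((n + a - 2 * k - 2 : ℤ) : ℚ)) ∧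
    ρ l = 1 ∧
    (∀ k : ℤ, 1 ≤ k → k ≤ l - 1 →
      ρ k = bracket (n + a - 2 * k - 2) ((-1 : F) ^ (l - k).toNat) * ρ (k + 1)) ∧
    (∀ ρ' : ℤ → F, ρ' l = 1 →
      (∀ k : ℤ, 1 ≤ k → k ≤ l - 1 →
        ρ' k = bracket (n + a - 2 * k - 2) ((-1 : F) ^ (l - k).toNat) * ρ' (k + 1)) →
      ∀ k : ℤ, 1 ≤ k → k ≤ l → ρ' k = ρ k) := by
  have hρl : ρ l = 1 := by
    rw [hρ l]
    simp [Finset.Icc_eq_empty_of_lt (by omega : (1 : ℤ) > l - l)]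
  have hrec : ∀ k : ℤ, 1 ≤ k → k ≤ l - 1 →
      ρ k = bracket (n + a - 2 * k - 2) ((-1 : F) ^ (l - k).toNat) * ρ (k + 1) := by
    intro k hk1 hk2
    rw [hρ k, hρ (k + 1), icc_insert_top (l - k) (by omega),
      Finset.prod_insert (by simp)]
    have h1 : l - k - 1 = l - (k + 1) := by ring
    have h2 : (a - 1) + 2 * (l - k) = n + a - 2 * k - 2 := by omega
    rw [h1, h2]
  refine ⟨?_, hρl, hrec, ?_⟩
  · intro k hk1 hk2
    have hC1 : C (k + 1) = ((k : ℚ) + 1) * ((n : ℚ) + a - (k + 1) - 1)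
        + (1 / 4) * l * ((a : ℚ) - 1) * ((n : ℚ) + a - 2) := by
      rcases lt_or_eq_of_le hk2 with h | h
      · rw [hC (k + 1) (by omega) (by omega)]; push_cast; ring
      · have hk : k = l - 1 := by omega
        subst hk
        rw [show l - 1 + 1 = l by ring, hCl]; push_cast; ring
    rw [hC1, hC k hk1 hk2]
    push_cast; ring
  · intro ρ' h1 h2
    have key : ∀ d : ℕ, ∀ k : ℤ, 1 ≤ k → k ≤ l → l - k = d → ρ' k = ρ k := by
      intro d
      induction d with
      | zero =>
        intro k hk1 hk2 hd
        have : k = l := by omega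
        rw [this, h1, hρl]
      | succ m ih =>
        intro k hk1 hk2 hd
        have hk2' : k ≤ l - 1 := by omega
        rw [h2 k hk1 hk2', hrec k hk1 hk2', ih (k + 1) (by omega) (by omega) (by omega)]
    intro k hk1 hk2
    exact key (l - k).toNat k hk1 hk2 (by omega)
end
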